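/- Let A be a unital C*-algebra and a, b ∈ A. With R_a = (1 + a*a)⁻¹ and R_b = (1 + b*b)⁻¹, one has ‖aR_a − bR_b‖ ≤ (1 + ‖b‖(‖a‖ + ‖b‖))·‖a − b‖. -/

import Mathlib

/-!
Write `R'_a = (1 + a a*)⁻¹`. The push-through identity `a R_a = R'_a a` gives
`a R_a - b R_b = R'_a (a (1 + b* b) - (1 + a a*) b) R_b = R'_a (a - b + a (b - a)* b) R_b`.
In a C*-algebra `1 + x* x ≥ 1`, so its inverse is a positive contraction; hence both outer
factors have norm at most `1`, and the middle one has norm at most `(1 + ‖a‖ ‖b‖) ‖a - b‖`.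
-/

open Ring

section Ring

variable {R : Type*} [Ring R]

lemma mul_ringInverse_one_add_mul_comm {a c : R} (hac : IsUnit (1 + a * c))
    (hca : IsUnit (1 + c * a)) :
    a * (1 + c * a)⁻¹ʳ = (1 + a * c)⁻¹ʳ * a := by
  have push : (1 + a * c) * a = a * (1 + c * a) := by noncomm_ring
  calc a * (1 + c * a)⁻¹ʳ = (1 + a * c)⁻¹ʳ * ((1 + a * c) * a) * (1 + c * a)⁻¹ʳ := by
        rw [← mul_assoc, inverse_mul_cancel _ hac, one_mul]
    _ = (1 + a * c)⁻¹ʳ * a := by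
        rw [push, ← mul_assoc, mul_inverse_cancel_right _ _ hca]

lemma mul_ringInverse_sub_mul_ringInverse {a b c d : R} (hac : IsUnit (1 + a * c))
    (hca : IsUnit (1 + c * a)) (hdb : IsUnit (1 + d * b)) :
    a * (1 + c * a)⁻¹ʳ - b * (1 + d * b)⁻¹ʳ =
      (1 + a * c)⁻¹ʳ * (a - b + a * (d - c) * b) * (1 + d * b)⁻¹ʳ := by
  have middle : a - b + a * (d - c) * b = a * (1 + d * b) - (1 + a * c) * b := by noncomm_ring
  rw [mul_ringInverse_one_add_mul_comm hac hca, middle, mul_sub, sub_mul, ← mul_assoc,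
    mul_inverse_cancel_right _ _ hdb, ← mul_assoc, inverse_mul_cancel _ hac, one_mul]

end Ring

lemma one_le_one_add_star_mul_self {R : Type*} [Semiring R] [PartialOrder R] [StarRing R]
    [StarOrderedRing R] (a : R) : 1 ≤ 1 + star a * a :=
  le_add_of_nonneg_right (star_mul_self_nonneg a)

section CStarAlgebra

variable {A : Type*} [CStarAlgebra A]

lemma CStarAlgebra.norm_ringInverse_le_one [PartialOrder A] [StarOrderedRing A] {x : A}
    (hx : 1 ≤ x) : ‖x⁻¹ʳ‖ ≤ 1 := by
  have hpos : IsStrictlyPositive x := isStrictlyPositive_one.of_le hx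
  rw [CStarAlgebra.norm_le_one_iff_of_nonneg _ hpos.ringInverse.nonneg]
  simpa using CStarAlgebra.ringInverse_le_ringInverse hx isStrictlyPositive_one

lemma CStarAlgebra.isUnit_one_add_star_mul_self (a : A) : IsUnit (1 + star a * a) :=
  letI := CStarAlgebra.spectralOrder A
  haveI := CStarAlgebra.spectralOrderedRing A
  CStarAlgebra.isUnit_of_le 1 (one_le_one_add_star_mul_self a)

lemma CStarAlgebra.norm_ringInverse_one_add_star_mul_self_le_one (a : A) :
    ‖(1 + star a * a)⁻¹ʳ‖ ≤ 1 :=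
  letI := CStarAlgebra.spectralOrder A
  haveI := CStarAlgebra.spectralOrderedRing A
  norm_ringInverse_le_one (one_le_one_add_star_mul_self a)

end CStarAlgebra

/-- Let `A` be a unital C*-algebra and `a, b ∈ A`. With `R_a = (1 + a*a)⁻¹` and
`R_b = (1 + b*b)⁻¹`, one has `‖aR_a − bR_b‖ ≤ (1 + ‖b‖(‖a‖ + ‖b‖))·‖a − b‖`. -/
theorem stmt_11 {A : Type*} [CStarAlgebra A] (a b : A) :
    ‖a * Ring.inverse (1 + star a * a) - b * Ring.inverse (1 + star b * b)‖ ≤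
      (1 + ‖b‖ * (‖a‖ + ‖b‖)) * ‖a - b‖ := by
  have hunit_adj : IsUnit (1 + a * star a) := by
    simpa using CStarAlgebra.isUnit_one_add_star_mul_self (star a)
  have hnorm_adj : ‖(1 + a * star a)⁻¹ʳ‖ ≤ 1 := by
    simpa using CStarAlgebra.norm_ringInverse_one_add_star_mul_self_le_one (star a)
  have hnorm_middle : ‖a - b + a * (star b - star a) * b‖ ≤ ‖a - b‖ + ‖a‖ * ‖a - b‖ * ‖b‖ := by
    calc _ ≤ ‖a - b‖ + ‖a‖ * ‖star b - star a‖ * ‖b‖ := norm_add_le_of_le le_rfl norm_mul₃_le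
      _ = ‖a - b‖ + ‖a‖ * ‖a - b‖ * ‖b‖ := by rw [← star_sub, norm_star, norm_sub_rev]
  rw [mul_ringInverse_sub_mul_ringInverse hunit_adj
    (CStarAlgebra.isUnit_one_add_star_mul_self a) (CStarAlgebra.isUnit_one_add_star_mul_self b)]
  calc _ ≤ ‖(1 + a * star a)⁻¹ʳ‖ * ‖a - b + a * (star b - star a) * b‖ *
        ‖(1 + star b * b)⁻¹ʳ‖ := norm_mul₃_le
    _ ≤ 1 * (‖a - b‖ + ‖a‖ * ‖a - b‖ * ‖b‖) * 1 := by
        gcongr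
        exact CStarAlgebra.norm_ringInverse_one_add_star_mul_self_le_one b
    _ ≤ (1 + ‖b‖ * (‖a‖ + ‖b‖)) * ‖a - b‖ := by
        nlinarith [mul_nonneg (sq_nonneg ‖b‖) (norm_nonneg (a - b))]
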